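/- Suppose M = 0 and q > 0. If u ∈ 𝔸_0 is a ground state (ℰ_q[u] ≤ ℰ_q[v] for all v ∈ 𝔸_0), then u₁ and u₋₁ are both identically zero on ℝ³. -/

import Mathlib

open MeasureTheory
open scoped RealInnerProductSpace

noncomputable section

abbrev E3 := EuclideanSpace ℝ (Fin 3)

/-- Pointwise squared norm `|u|² = u₁² + u₀² + u₋₁²` of a triple of functions. -/
def nsq (u1 u0 um1 : E3 → ℝ) (x : E3) : ℝ := u1 x ^ 2 + u0 x ^ 2 + um1 x ^ 2

/-- The energy functional `ℰ_q[u]`. -/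
def energy (V : E3 → ℝ) (βn βs q : ℝ) (u1 u0 um1 : E3 → ℝ) : ℝ :=
  ∫ x : E3,
    (‖gradient u1 x‖ ^ 2 + ‖gradient u0 x‖ ^ 2 + ‖gradient um1 x‖ ^ 2
      + V x * nsq u1 u0 um1 x
      + βn * (nsq u1 u0 um1 x) ^ 2
      + βs * (2 * u0 x ^ 2 * (u1 x - um1 x) ^ 2 + (u1 x ^ 2 - um1 x ^ 2) ^ 2)
      + q * (u1 x ^ 2 + um1 x ^ 2))

/-- The admissible class `𝔸_M`: triples of nonnegative `C¹` functions with the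
required integrability and the constraints `𝒩[u] = 1`, `ℳ[u] = M`. -/
structure Admissible (V : E3 → ℝ) (M : ℝ) (u1 u0 um1 : E3 → ℝ) : Prop where
  smooth1 : ContDiff ℝ 1 u1
  smooth0 : ContDiff ℝ 1 u0
  smoothm1 : ContDiff ℝ 1 um1
  nonneg1 : ∀ x, 0 ≤ u1 x
  nonneg0 : ∀ x, 0 ≤ u0 x
  nonnegm1 : ∀ x, 0 ≤ um1 x
  l2_1 : Integrable (fun x => u1 x ^ 2)
  l2_0 : Integrable (fun x => u0 x ^ 2)
  l2_m1 : Integrable (fun x => um1 x ^ 2)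
  grad2_1 : Integrable (fun x => ‖gradient u1 x‖ ^ 2)
  grad2_0 : Integrable (fun x => ‖gradient u0 x‖ ^ 2)
  grad2_m1 : Integrable (fun x => ‖gradient um1 x‖ ^ 2)
  l4_1 : Integrable (fun x => u1 x ^ 4)
  l4_0 : Integrable (fun x => u0 x ^ 4)
  l4_m1 : Integrable (fun x => um1 x ^ 4)
  pot : Integrable (fun x => V x * nsq u1 u0 um1 x)
  mass : ∫ x : E3, nsq u1 u0 um1 x = 1
  magnetization : ∫ x : E3, (u1 x ^ 2 - um1 x ^ 2) = M

/-- Hypotheses on the trap potential `V`: measurable, nonnegative, locally bounded,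
and tending to infinity at infinity. -/
structure TrapPotential (V : E3 → ℝ) : Prop where
  meas : Measurable V
  nonneg : ∀ x, 0 ≤ V x
  bddOnBalls : ∀ r : ℝ, ∃ C : ℝ, ∀ x : E3, ‖x‖ ≤ r → V x ≤ C
  tendsToInfty : ∀ C : ℝ, 0 < C → ∃ R : ℝ, 0 < R ∧ ∀ x : E3, R ≤ ‖x‖ → C ≤ V x

/-- `u` is a ground state: admissible and minimizes the energy over `𝔸_M`. -/
def IsGroundState (V : E3 → ℝ) (βn βs q M : ℝ) (u1 u0 um1 : E3 → ℝ) : Prop :=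
  Admissible V M u1 u0 um1 ∧
    ∀ v1 v0 vm1 : E3 → ℝ, Admissible V M v1 v0 vm1 →
      energy V βn βs q u1 u0 um1 ≤ energy V βn βs q v1 v0 vm1

/-!
Replace a ground state `u` by `(0, |u|, 0)` with `|u| = √(u₁² + u₀² + u₋₁²)`. This keeps the
mass and the (zero) magnetization, leaves the trap and density–density terms unchanged, removes
the nonnegative spin term and the Zeeman term `q ∫ (u₁² + u₋₁²)`, and does not increase the
kinetic energy, since `|∇|u||² ≤ |∇u₁|² + |∇u₀|² + |∇u₋₁|²` by Cauchy–Schwarz. Minimality then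
forces `q ∫ (u₁² + u₋₁²) ≤ 0`, so the continuous functions `u₁`, `u₋₁` vanish. The delicate point
is that `|u|` is `C¹`: at a zero of `|u|` every (nonnegative) component is minimal, so all
first derivatives vanish there.
-/

open Filter Topology Asymptotics

theorem norm_sum_smul_le_sqrt_mul_sqrt {ι F : Type*} [NormedAddCommGroup F] [NormedSpace ℝ F]
    (s : Finset ι) (a : ι → ℝ) (L : ι → F) :
    ‖∑ i ∈ s, a i • L i‖ ≤ √(∑ i ∈ s, a i ^ 2) * √(∑ i ∈ s, ‖L i‖ ^ 2) :=
  calc ‖∑ i ∈ s, a i • L i‖ ≤ ∑ i ∈ s, |a i| * ‖L i‖ := by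
        simpa only [norm_smul, Real.norm_eq_abs] using norm_sum_le s fun i => a i • L i
    _ ≤ √(∑ i ∈ s, |a i| ^ 2) * √(∑ i ∈ s, ‖L i‖ ^ 2) := Real.sum_mul_le_sqrt_mul_sqrt _ _ _
    _ = √(∑ i ∈ s, a i ^ 2) * √(∑ i ∈ s, ‖L i‖ ^ 2) := by simp only [sq_abs]

section SqrtSumSq

variable {ι E : Type*} [Fintype ι] [NormedAddCommGroup E] [NormedSpace ℝ E] {f : ι → E → ℝ}

theorem sqrt_sum_sq_le_sum_of_nonneg {a : ι → ℝ} (ha : ∀ i, 0 ≤ a i) :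
    √(∑ i, a i ^ 2) ≤ ∑ i, a i :=
  Real.sqrt_le_iff.mpr ⟨Finset.sum_nonneg fun i _ => ha i,
    Finset.sum_sq_le_sq_sum_of_nonneg fun i _ => ha i⟩

theorem fderiv_eq_zero_of_sum_sq_eq_zero (hf0 : ∀ i y, 0 ≤ f i y) {x : E}
    (hx : ∑ i, f i x ^ 2 = 0) (i : ι) : f i x = 0 ∧ fderiv ℝ (f i) x = 0 := by
  have hfx : f i x = 0 := pow_eq_zero_iff two_ne_zero |>.mp <|
    (Finset.sum_eq_zero_iff_of_nonneg fun j _ => sq_nonneg (f j x)).mp hx i (Finset.mem_univ i)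
  have hmin : IsLocalMin (f i) x := Eventually.of_forall fun y => hfx ▸ hf0 i y
  exact ⟨hfx, hmin.fderiv_eq_zero⟩

/-- At a zero of `∑ fᵢ²` the formula reads `0⁻¹ • 0 = 0`, which is the right derivative there
because a nonnegative function vanishes to first order at its zeros. -/
theorem hasFDerivAt_sqrt_sum_sq (hf : ∀ i, Differentiable ℝ (f i)) (hf0 : ∀ i y, 0 ≤ f i y)
    (x : E) :
    HasFDerivAt (fun y => √(∑ i, f i y ^ 2))
      ((√(∑ i, f i x ^ 2))⁻¹ • ∑ i, f i x • fderiv ℝ (f i) x) x := by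
  by_cases hS : ∑ i, f i x ^ 2 = 0
  · have hlo : ∀ i, f i =o[𝓝 x] fun y => y - x := fun i => by
      obtain ⟨hfx, hf'x⟩ := fderiv_eq_zero_of_sum_sq_eq_zero hf0 hS i
      simpa [hfx, hf'x] using (hf i x).hasFDerivAt.isLittleO
    have hbound : (fun y => √(∑ i, f i y ^ 2)) =O[𝓝 x] fun y => ∑ i, f i y :=
      isBigO_of_le _ fun y => by
        rw [Real.norm_of_nonneg (Real.sqrt_nonneg _),
          Real.norm_of_nonneg (Finset.sum_nonneg fun i _ => hf0 i y)]
        exact sqrt_sum_sq_le_sum_of_nonneg fun i => hf0 i y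
    rw [hasFDerivAt_iff_isLittleO, hS]
    simpa [hS] using hbound.trans_isLittleO (IsLittleO.fun_sum fun i _ => hlo i)
  · have hsum : HasFDerivAt (fun y => ∑ i, f i y ^ 2) (∑ i, (2 * f i x) • fderiv ℝ (f i) x) x :=
      HasFDerivAt.fun_sum fun i _ => by
        simpa using ((hf i x).hasFDerivAt.pow 2)
    refine ((Real.hasDerivAt_sqrt hS).comp_hasFDerivAt x hsum).congr_fderiv ?_
    simp only [Finset.smul_sum, smul_smul]
    refine Finset.sum_congr rfl fun i _ => ?_
    congr 1
    field_simp

theorem norm_fderiv_sqrt_sum_sq_le (hf : ∀ i, Differentiable ℝ (f i)) (hf0 : ∀ i y, 0 ≤ f i y)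
    (x : E) :
    ‖fderiv ℝ (fun y => √(∑ i, f i y ^ 2)) x‖ ≤ √(∑ i, ‖fderiv ℝ (f i) x‖ ^ 2) := by
  rw [(hasFDerivAt_sqrt_sum_sq hf hf0 x).fderiv, norm_smul, Real.norm_of_nonneg (by positivity)]
  set s := √(∑ i, f i x ^ 2)
  calc s⁻¹ * ‖∑ i, f i x • fderiv ℝ (f i) x‖
      ≤ s⁻¹ * (s * √(∑ i, ‖fderiv ℝ (f i) x‖ ^ 2)) := by
        gcongr; exact norm_sum_smul_le_sqrt_mul_sqrt _ _ _
    _ ≤ √(∑ i, ‖fderiv ℝ (f i) x‖ ^ 2) := by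
        rcases eq_or_ne s 0 with hs | hs
        · simp [hs]
        · rw [inv_mul_cancel_left₀ hs]

theorem contDiff_one_sqrt_sum_sq (hf : ∀ i, ContDiff ℝ 1 (f i)) (hf0 : ∀ i y, 0 ≤ f i y) :
    ContDiff ℝ 1 (fun y => √(∑ i, f i y ^ 2)) := by
  have hdiff : ∀ i, Differentiable ℝ (f i) := fun i => (hf i).differentiable one_ne_zero
  have hderiv := hasFDerivAt_sqrt_sum_sq hdiff hf0
  refine contDiff_one_iff_fderiv.mpr ⟨fun x => (hderiv x).differentiableAt, ?_⟩
  have hcont : ∀ i, Continuous (fderiv ℝ (f i)) := fun i => (hf i).continuous_fderiv one_ne_zero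
  have hS : Continuous fun y => ∑ i, f i y ^ 2 := by
    have := fun i => (hf i).continuous; fun_prop
  refine continuous_iff_continuousAt.mpr fun x => ?_
  by_cases hx : ∑ i, f i x ^ 2 = 0
  · have hB : Continuous fun y => √(∑ i, ‖fderiv ℝ (f i) y‖ ^ 2) := by fun_prop
    have hB0 : √(∑ i, ‖fderiv ℝ (f i) x‖ ^ 2) = 0 := by
      simp [(fderiv_eq_zero_of_sum_sq_eq_zero hf0 hx _).2]
    rw [ContinuousAt, (hderiv x).fderiv, hx, Real.sqrt_zero, inv_zero, zero_smul]
    refine squeeze_zero_norm (norm_fderiv_sqrt_sum_sq_le hdiff hf0) ?_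
    simpa [hB0] using hB.tendsto x
  · rw [funext fun y => (hderiv y).fderiv]
    have hsum : Continuous fun y => ∑ i, f i y • fderiv ℝ (f i) y :=
      continuous_finsetSum _ fun i _ => (hf i).continuous.smul (hcont i)
    exact (hS.sqrt.continuousAt.inv₀ (mt (Real.sqrt_eq_zero (by positivity)).mp hx)).smul
      hsum.continuousAt

end SqrtSumSq

theorem norm_gradient_eq_norm_fderiv {F : Type*} [NormedAddCommGroup F] [InnerProductSpace ℝ F]
    [CompleteSpace F] (g : F → ℝ) (x : F) : ‖gradient g x‖ = ‖fderiv ℝ g x‖ := by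
  rw [← toDual_gradient, LinearIsometryEquiv.norm_map]

theorem gradient_zero_apply {F : Type*} [NormedAddCommGroup F] [InnerProductSpace ℝ F]
    [CompleteSpace F] (x : F) : gradient (0 : F → ℝ) x = 0 :=
  gradient_fun_const x 0

theorem Continuous.eq_zero_of_integral_sq_eq_zero {X : Type*} [TopologicalSpace X]
    [MeasurableSpace X] [OpensMeasurableSpace X] {μ : Measure X} [μ.IsOpenPosMeasure]
    {g : X → ℝ} (hg : Continuous g) (hi : Integrable (fun x => g x ^ 2) μ)
    (h : ∫ x, g x ^ 2 ∂μ = 0) : g = 0 := by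
  have hae := (integral_eq_zero_iff_of_nonneg (fun x => sq_nonneg (g x)) hi).mp h
  funext x
  exact pow_eq_zero_iff two_ne_zero |>.mp <|
    congrFun (((hg.pow 2).ae_eq_iff_eq μ continuous_const).mp hae) x

def modulus (u1 u0 um1 : E3 → ℝ) (x : E3) : ℝ := √(nsq u1 u0 um1 x)

def energyDensity (V : E3 → ℝ) (βn βs q : ℝ) (u1 u0 um1 : E3 → ℝ) (x : E3) : ℝ :=
  ‖gradient u1 x‖ ^ 2 + ‖gradient u0 x‖ ^ 2 + ‖gradient um1 x‖ ^ 2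
    + V x * nsq u1 u0 um1 x
    + βn * (nsq u1 u0 um1 x) ^ 2
    + βs * (2 * u0 x ^ 2 * (u1 x - um1 x) ^ 2 + (u1 x ^ 2 - um1 x ^ 2) ^ 2)
    + q * (u1 x ^ 2 + um1 x ^ 2)

theorem energy_eq_integral_energyDensity (V : E3 → ℝ) (βn βs q : ℝ) (u1 u0 um1 : E3 → ℝ) :
    energy V βn βs q u1 u0 um1 = ∫ x, energyDensity V βn βs q u1 u0 um1 x := rfl

theorem modulus_eq_sqrt_sum_sq (u1 u0 um1 : E3 → ℝ) :
    modulus u1 u0 um1 = fun x => √(∑ i, ![u1, u0, um1] i x ^ 2) := by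
  funext x
  simp [modulus, nsq, Fin.sum_univ_three]

theorem nsq_nonneg (u1 u0 um1 : E3 → ℝ) (x : E3) : 0 ≤ nsq u1 u0 um1 x := by
  unfold nsq; positivity

theorem modulus_sq (u1 u0 um1 : E3 → ℝ) (x : E3) : modulus u1 u0 um1 x ^ 2 = nsq u1 u0 um1 x :=
  Real.sq_sqrt (nsq_nonneg u1 u0 um1 x)

theorem nsq_zero_modulus_zero (u1 u0 um1 : E3 → ℝ) :
    nsq 0 (modulus u1 u0 um1) 0 = nsq u1 u0 um1 := by
  funext x
  simp [nsq, modulus_sq]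

namespace Admissible

variable {V : E3 → ℝ} {M : ℝ} {u1 u0 um1 : E3 → ℝ}

theorem contDiff_modulus (hu : Admissible V M u1 u0 um1) : ContDiff ℝ 1 (modulus u1 u0 um1) := by
  rw [modulus_eq_sqrt_sum_sq]
  refine contDiff_one_sqrt_sum_sq (fun i => ?_) (fun i => ?_)
  all_goals fin_cases i
  all_goals simp [hu.smooth1, hu.smooth0, hu.smoothm1, hu.nonneg1, hu.nonneg0, hu.nonnegm1]

theorem norm_gradient_modulus_sq_le (hu : Admissible V M u1 u0 um1) (x : E3) :
    ‖gradient (modulus u1 u0 um1) x‖ ^ 2 ≤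
      ‖gradient u1 x‖ ^ 2 + ‖gradient u0 x‖ ^ 2 + ‖gradient um1 x‖ ^ 2 := by
  have hdiff : ∀ i, Differentiable ℝ (![u1, u0, um1] i) := by
    intro i; fin_cases i
    all_goals simp [hu.smooth1.differentiable one_ne_zero, hu.smooth0.differentiable one_ne_zero,
      hu.smoothm1.differentiable one_ne_zero]
  have hnonneg : ∀ i y, 0 ≤ ![u1, u0, um1] i y := by
    intro i; fin_cases i
    all_goals simp [hu.nonneg1, hu.nonneg0, hu.nonnegm1]
  have h := norm_fderiv_sqrt_sum_sq_le hdiff hnonneg x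
  rw [← modulus_eq_sqrt_sum_sq, Real.le_sqrt (norm_nonneg _) (by positivity)] at h
  simpa [norm_gradient_eq_norm_fderiv, Fin.sum_univ_three] using h

theorem integrable_norm_gradient_modulus_sq (hu : Admissible V M u1 u0 um1) :
    Integrable fun x => ‖gradient (modulus u1 u0 um1) x‖ ^ 2 := by
  have hcont : Continuous (gradient (modulus u1 u0 um1)) :=
    (InnerProductSpace.toDual ℝ E3).symm.continuous.comp
      (hu.contDiff_modulus.continuous_fderiv one_ne_zero)
  refine Integrable.mono' ((hu.grad2_1.add hu.grad2_0).add hu.grad2_m1)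
    (hcont.norm.pow 2).aestronglyMeasurable (Eventually.of_forall fun x => ?_)
  rw [Real.norm_of_nonneg (by positivity)]
  exact hu.norm_gradient_modulus_sq_le x

theorem continuous_nsq (hu : Admissible V M u1 u0 um1) : Continuous (nsq u1 u0 um1) := by
  have := hu.smooth1.continuous; have := hu.smooth0.continuous; have := hu.smoothm1.continuous
  unfold nsq; fun_prop

theorem integrable_nsq (hu : Admissible V M u1 u0 um1) : Integrable (nsq u1 u0 um1) :=
  (hu.l2_1.add hu.l2_0).add hu.l2_m1

theorem integrable_nsq_sq (hu : Admissible V M u1 u0 um1) :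
    Integrable fun x => nsq u1 u0 um1 x ^ 2 := by
  refine Integrable.mono' (((hu.l4_1.add hu.l4_0).add hu.l4_m1).const_mul 3)
    (hu.continuous_nsq.pow 2).aestronglyMeasurable (Eventually.of_forall fun x => ?_)
  rw [Real.norm_of_nonneg (by positivity)]
  simp only [nsq, Pi.add_apply]
  nlinarith [sq_nonneg (u1 x ^ 2 - u0 x ^ 2), sq_nonneg (u1 x ^ 2 - um1 x ^ 2),
    sq_nonneg (u0 x ^ 2 - um1 x ^ 2)]

theorem integrable_spinInteraction (hu : Admissible V M u1 u0 um1) :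
    Integrable fun x => 2 * u0 x ^ 2 * (u1 x - um1 x) ^ 2 + (u1 x ^ 2 - um1 x ^ 2) ^ 2 := by
  have := hu.smooth1.continuous; have := hu.smooth0.continuous; have := hu.smoothm1.continuous
  refine Integrable.mono' (((hu.l4_1.add hu.l4_0).add hu.l4_m1).const_mul 6)
    (by fun_prop : Continuous _).aestronglyMeasurable (Eventually.of_forall fun x => ?_)
  rw [Real.norm_of_nonneg (by positivity)]
  simp only [Pi.add_apply]
  nlinarith [sq_nonneg (u0 x ^ 2 - u1 x ^ 2), sq_nonneg (u0 x ^ 2 - um1 x ^ 2),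
    sq_nonneg (u1 x ^ 2 - um1 x ^ 2), sq_nonneg (u1 x + um1 x), sq_nonneg (u1 x - um1 x),
    sq_nonneg (u0 x * (u1 x - um1 x)), sq_nonneg (u1 x * um1 x)]

theorem integrable_energyDensity (hu : Admissible V M u1 u0 um1) (βn βs q : ℝ) :
    Integrable (energyDensity V βn βs q u1 u0 um1) :=
  (((((hu.grad2_1.add hu.grad2_0).add hu.grad2_m1).add hu.pot).add
    (hu.integrable_nsq_sq.const_mul βn)).add (hu.integrable_spinInteraction.const_mul βs)).add
    ((hu.l2_1.add hu.l2_m1).const_mul q)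

protected theorem modulus (hu : Admissible V M u1 u0 um1) :
    Admissible V 0 0 (modulus u1 u0 um1) 0 where
  smooth1 := contDiff_const
  smooth0 := hu.contDiff_modulus
  smoothm1 := contDiff_const
  nonneg1 _ := le_rfl
  nonneg0 _ := Real.sqrt_nonneg _
  nonnegm1 _ := le_rfl
  l2_1 := by simp
  l2_0 := by simpa only [modulus_sq] using hu.integrable_nsq
  l2_m1 := by simp
  grad2_1 := by simp [gradient_zero_apply]
  grad2_0 := hu.integrable_norm_gradient_modulus_sq
  grad2_m1 := by simp [gradient_zero_apply]
  l4_1 := by simp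
  l4_0 := by
    simpa only [show (4 : ℕ) = 2 * 2 from rfl, pow_mul, modulus_sq] using hu.integrable_nsq_sq
  l4_m1 := by simp
  pot := by simpa only [nsq_zero_modulus_zero] using hu.pot
  mass := by simpa only [nsq_zero_modulus_zero] using hu.mass
  magnetization := by simp

theorem energyDensity_modulus_add_le (hu : Admissible V M u1 u0 um1) {βs : ℝ} (hβs : 0 ≤ βs)
    (βn q : ℝ) (x : E3) :
    energyDensity V βn βs q 0 (modulus u1 u0 um1) 0 x + q * (u1 x ^ 2 + um1 x ^ 2) ≤
      energyDensity V βn βs q u1 u0 um1 x := by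
  have hgrad := hu.norm_gradient_modulus_sq_le x
  have hspin : 0 ≤ βs * (2 * u0 x ^ 2 * (u1 x - um1 x) ^ 2 + (u1 x ^ 2 - um1 x ^ 2) ^ 2) := by
    positivity
  simp only [energyDensity, nsq_zero_modulus_zero, gradient_zero_apply, Pi.zero_apply, norm_zero,
    sub_self, ne_eq, OfNat.ofNat_ne_zero, not_false_eq_true, zero_pow, mul_zero, add_zero]
  linarith

theorem energy_modulus_add_le (hu : Admissible V M u1 u0 um1) {βs : ℝ} (hβs : 0 ≤ βs)
    (βn q : ℝ) :
    energy V βn βs q 0 (modulus u1 u0 um1) 0 + q * ((∫ x, u1 x ^ 2) + ∫ x, um1 x ^ 2) ≤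
      energy V βn βs q u1 u0 um1 := by
  have hzeeman : Integrable fun x => q * (u1 x ^ 2 + um1 x ^ 2) :=
    (hu.l2_1.add hu.l2_m1).const_mul q
  rw [energy_eq_integral_energyDensity, energy_eq_integral_energyDensity,
    ← integral_add hu.l2_1 hu.l2_m1, ← integral_const_mul,
    ← integral_add (hu.modulus.integrable_energyDensity βn βs q) hzeeman]
  exact integral_mono ((hu.modulus.integrable_energyDensity βn βs q).add hzeeman)
    (hu.integrable_energyDensity βn βs q) (hu.energyDensity_modulus_add_le hβs βn q)

end Admissible

theorem ground_state_M_zero_q_pos_general (V : E3 → ℝ) (βn βs q : ℝ)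
    (hβs : 0 < βs) (hq : 0 < q)
    (u1 u0 um1 : E3 → ℝ)
    (hu : IsGroundState V βn βs q 0 u1 u0 um1) :
    (∀ x, u1 x = 0) ∧ (∀ x, um1 x = 0) := by
  obtain ⟨hA, hmin⟩ := hu
  have hle := (hA.energy_modulus_add_le hβs.le βn q).trans (hmin _ _ _ hA.modulus)
  have h1 : 0 ≤ ∫ x, u1 x ^ 2 := integral_nonneg fun x => sq_nonneg _
  have hm1 : 0 ≤ ∫ x, um1 x ^ 2 := integral_nonneg fun x => sq_nonneg _
  have hsum : (∫ x, u1 x ^ 2) + ∫ x, um1 x ^ 2 ≤ 0 :=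
    nonpos_of_mul_nonpos_right (by linarith) hq
  exact ⟨congrFun (hA.smooth1.continuous.eq_zero_of_integral_sq_eq_zero hA.l2_1 (by linarith)),
    congrFun (hA.smoothm1.continuous.eq_zero_of_integral_sq_eq_zero hA.l2_m1 (by linarith))⟩

/-- for `M = 0` and `q > 0`, the outer components of a ground state vanish. -/
theorem ground_state_M_zero_q_pos (V : E3 → ℝ) (βn βs q : ℝ)
    (hV : TrapPotential V) (hβn : 0 < βn) (hβs : 0 < βs) (hq : 0 < q)
    (u1 u0 um1 : E3 → ℝ)
    (hu : IsGroundState V βn βs q 0 u1 u0 um1) :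
    (∀ x, u1 x = 0) ∧ (∀ x, um1 x = 0) :=
  ground_state_M_zero_q_pos_general V βn βs q hβs hq u1 u0 um1 hu
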